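/- Let N ≥ 1, m ≥ 1, let u : Fin m → (ZMod N → ZMod 4), and let κ, κ' : Fin m → ZMod 4 satisfy κ_k = κ'_k for all k ≠ 0. Define s(t) = (1+i) · ∑_{k=0}^{m−1} 2^k · i^{u_k(t)} · i^{κ_k} and s'(t) = (1+i) · ∑_{k=0}^{m−1} 2^k · i^{u_k(t)} · i^{κ'_k}. Then ∑_{t ∈ ZMod N} |s(t) − s'(t)|² = 2·N·|i^{κ_0} − i^{κ'_0}|². -/

import Mathlib

/-- For `a ∈ ZMod 4`, the complex number `i^a := Complex.I ^ a.val`. -/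
noncomputable def zi (a : ZMod 4) : ℂ := Complex.I ^ a.val

/-- Periodic correlation of complex sequences of period `N` at shift `τ`:
`θ_{s,s'}(τ) = ∑_t s(t+τ) · conj (s'(t))`. -/
noncomputable def pcorr {N : ℕ} [NeZero N] (s s' : ZMod N → ℂ) (τ : ZMod N) : ℂ :=
  ∑ t : ZMod N, s (t + τ) * (starRingEnd ℂ) (s' t)

/-- Periodic correlation of quaternary sequences of period `N` at shift `τ`:
`θ_{u,v}(τ) = ∑_t i^{u(t+τ)} · conj (i^{v(t)})`. -/
noncomputable def qcorr {N : ℕ} [NeZero N] (u v : ZMod N → ZMod 4) (τ : ZMod N) : ℂ :=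
  ∑ t : ZMod N, zi (u (t + τ)) * (starRingEnd ℂ) (zi (v t))

/-! Both modulations carry the same unimodular spreading factors `i^{u_k(t)}`, so at every
time `t` their difference collapses to the single `k = 0` term `(1+i) i^{u_0(t)} (i^{κ_0} - i^{κ'_0})`,
whose squared modulus `2 |i^{κ_0} - i^{κ'_0}|²` does not depend on `t`. -/

theorem norm_zi (a : ZMod 4) : ‖zi a‖ = 1 := by
  simp [zi]

theorem norm_one_add_I_sq : ‖1 + Complex.I‖ ^ 2 = 2 := by
  rw [← Complex.normSq_eq_norm_sq, Complex.normSq_apply]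
  norm_num

theorem Fintype.sum_sub_sum_eq_of_eq_of_ne {ι M : Type*} [Fintype ι] [AddCommGroup M]
    {f g : ι → M} (i : ι) (h : ∀ j, j ≠ i → f j = g j) :
    ∑ j, f j - ∑ j, g j = f i - g i := by
  rw [← Finset.sum_sub_distrib, Fintype.sum_eq_single i]
  intro j hj
  rw [h j hj, sub_self]

/-- The paper's `s(t)` is `qamSymbol (fun k => u k t) κ`. -/
noncomputable def qamSymbol {m : ℕ} (x κ : Fin m → ZMod 4) : ℂ :=
  (1 + Complex.I) * ∑ k : Fin m, (2 : ℂ) ^ (k : ℕ) * zi (x k) * zi (κ k)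

theorem qamSymbol_sub_qamSymbol_of_eq_of_ne {m : ℕ} (x κ κ' : Fin m → ZMod 4) (i : Fin m)
    (h : ∀ k, k ≠ i → κ k = κ' k) :
    qamSymbol x κ - qamSymbol x κ' =
      (1 + Complex.I) * (2 : ℂ) ^ (i : ℕ) * zi (x i) * (zi (κ i) - zi (κ' i)) := by
  rw [qamSymbol, qamSymbol, ← mul_sub,
    Fintype.sum_sub_sum_eq_of_eq_of_ne i fun k hk => by rw [h k hk]]
  ring

theorem norm_qamSymbol_sub_qamSymbol_sq {m : ℕ} [NeZero m] (x κ κ' : Fin m → ZMod 4)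
    (h : ∀ k, k ≠ 0 → κ k = κ' k) :
    ‖qamSymbol x κ - qamSymbol x κ'‖ ^ 2 = 2 * ‖zi (κ 0) - zi (κ' 0)‖ ^ 2 := by
  rw [qamSymbol_sub_qamSymbol_of_eq_of_ne x κ κ' 0 h]
  simp only [norm_mul, mul_pow, norm_one_add_I_sq, norm_zi, Fin.val_zero, pow_zero,
    mul_one]

/-- If two data modulations of the same `4^m`-QAM spreading sequence differ
only in the component `κ_0`, the squared Euclidean distance between them is exactly
`2·N·|i^{κ_0} - i^{κ'_0}|²`. -/
theorem qam_distance_single_component (N m : ℕ) [NeZero N] [NeZero m]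
    (u : Fin m → ZMod N → ZMod 4) (κ κ' : Fin m → ZMod 4)
    (hκ : ∀ k : Fin m, k ≠ 0 → κ k = κ' k) :
    ∑ t : ZMod N,
      ‖
        ((1 + Complex.I) * ∑ k : Fin m, (2 : ℂ) ^ (k : ℕ) * zi (u k t) * zi (κ k)
        - (1 + Complex.I) * ∑ k : Fin m, (2 : ℂ) ^ (k : ℕ) * zi (u k t) * zi (κ' k))‖ ^ 2
    = 2 * N * ‖zi (κ 0) - zi (κ' 0)‖ ^ 2 := by
  change ∑ t : ZMod N, ‖qamSymbol (u · t) κ - qamSymbol (u · t) κ'‖ ^ 2 = _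
  simp only [norm_qamSymbol_sub_qamSymbol_sq _ κ κ' hκ, Finset.sum_const, Finset.card_univ,
    ZMod.card, nsmul_eq_mul]
  ring
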